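/- arXiv:1703.06332 — 3 statements merged into one kernel-verified Lean document; each statement's English description precedes it below -/
import Mathlib

section
/- Let M be a nonempty compact metric space, f : M → M continuous, μ an f-invariant Borel probability measure on M, and μ̃ a Borel probability measure on the inverse limit space M^f that is invariant under the shift map f̃ and satisfies π_* μ̃ = μ. If μ is ergodic for f, then μ̃ is ergodic for f̃. -/
open MeasureTheory

/-- The inverse limit space of a map `f : M → M`. -/
def InvLimit {M : Type*} (f : M → M) : Set (ℤ → M) :=
  {x | ∀ n : ℤ, f (x n) = x (n + 1)}

/-- The shift map `f̃` on the inverse limit space. -/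
def shiftMap {M : Type*} (f : M → M) (x : InvLimit f) : InvLimit f :=
  ⟨fun n => x.1 (n + 1), fun n => x.2 (n + 1)⟩

/-- The natural projection `π : M^f → M`, `π x̃ = x̃ 0`. -/
def invProj {M : Type*} (f : M → M) (x : InvLimit f) : M := x.1 0

/-!
Every measurable subset of `M^f` is approximated by cylinders over a single coordinate `x̃ (-n)`,
and pulling such a cylinder back by `f̃ⁿ` turns it into a cylinder over `x̃ 0` while fixing a
shift-invariant set `A`. By Borel–Cantelli, `A` is then a.e. equal to `π⁻¹' T` for a measurable
`T`, which is a.e. `f`-invariant, hence null or conull by ergodicity of `μ`.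
-/

open Filter Function Set
open scoped symmDiff

namespace MeasureTheory

variable {α β : Type*}

theorem isSetAlgebra_iUnion_measurableSet {ι : Type*} [Nonempty ι] {F : ι → MeasurableSpace α}
    (hF : Directed (· ≤ ·) F) : IsSetAlgebra (⋃ i, {s | MeasurableSet[F i] s}) where
  empty_mem := mem_iUnion.2 ⟨Classical.arbitrary ι, @MeasurableSet.empty _ (F _)⟩
  compl_mem s hs := by
    obtain ⟨i, hs⟩ := mem_iUnion.1 hs
    exact mem_iUnion.2 ⟨i, hs.compl⟩
  union_mem s t hs ht := by
    obtain ⟨i, hs⟩ := mem_iUnion.1 hs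
    obtain ⟨j, ht⟩ := mem_iUnion.1 ht
    obtain ⟨k, hik, hjk⟩ := hF i j
    exact mem_iUnion.2 ⟨k, (hik _ hs).union (hjk _ ht)⟩

theorem Measure.measureDense_iUnion_measurableSet {ι : Type*} [Nonempty ι] {m : MeasurableSpace α}
    (μ : Measure α) [IsFiniteMeasure μ] {F : ι → MeasurableSpace α} (hF : Directed (· ≤ ·) F)
    (hm : m = ⨆ i, F i) : μ.MeasureDense (⋃ i, {s | MeasurableSet[F i] s}) :=
  .of_generateFrom_isSetAlgebra_finite μ (isSetAlgebra_iUnion_measurableSet hF)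
    (hm.trans (MeasurableSpace.generateFrom_iUnion_measurableSet F).symm)

variable [MeasurableSpace α] [MeasurableSpace β] {μ : Measure α} {ν : Measure β}

theorem ae_eq_limsup_of_tsum_measure_symmDiff_ne_top {A : Set α} {B : ℕ → Set α}
    (h : ∑' k, μ (A ∆ B k) ≠ ⊤) : A =ᵐ[μ] (limsup B atTop : Set α) := by
  filter_upwards [ae_eventually_notMem h] with x hx
  have hAB : ∀ᶠ k in atTop, (x ∈ B k ↔ x ∈ A) :=
    hx.mono fun k hk => by rw [mem_symmDiff] at hk; tauto
  change (x ∈ A) = (x ∈ limsup B atTop)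
  rw [eq_iff_iff, mem_limsup_iff_frequently_mem]
  exact ⟨fun hA => (hAB.mono fun k hk => hk.2 hA).frequently,
    fun hB => (hB.and_eventually hAB).exists.elim fun k hk => hk.2.1 hk.1⟩

theorem exists_ae_eq_preimage_of_forall_measure_symmDiff_lt (g : α → β) {A : Set α}
    (h : ∀ ε : ℝ, 0 < ε → ∃ S, MeasurableSet S ∧ μ (A ∆ (g ⁻¹' S)) < ENNReal.ofReal ε) :
    ∃ T, MeasurableSet T ∧ A =ᵐ[μ] g ⁻¹' T := by
  choose S hS hAS using fun k : ℕ => h ((1 / 2) ^ k) (by positivity)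
  refine ⟨limsup S atTop, .measurableSet_limsup hS, ?_⟩
  have hpre : g ⁻¹' limsup S atTop = limsup (fun k => g ⁻¹' S k) atTop := by
    simp only [limsup_eq_iInf_iSup_of_nat, iInf_eq_iInter, iSup_eq_iUnion, preimage_iInter,
      preimage_iUnion]
  rw [hpre]
  refine ae_eq_limsup_of_tsum_measure_symmDiff_ne_top (ne_top_of_le_ne_top ?_
    (ENNReal.tsum_le_tsum fun k => (hAS k).le))
  rw [← ENNReal.ofReal_tsum_of_nonneg (fun k => by positivity) summable_geometric_two]
  exact ENNReal.ofReal_ne_top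

theorem MeasurePreserving.ae_eq_of_preimage_ae_eq {π : α → β}
    (hπ : MeasurePreserving π μ ν) {s t : Set β} (hs : MeasurableSet s) (ht : MeasurableSet t)
    (h : π ⁻¹' s =ᵐ[μ] π ⁻¹' t) : s =ᵐ[ν] t := by
  rw [← measure_symmDiff_eq_zero_iff, ← hπ.measure_preimage (hs.symmDiff ht).nullMeasurableSet,
    preimage_symmDiff, measure_symmDiff_eq_zero_iff]
  exact h

theorem QuasiErgodic.preErgodic_of_semiconj {g : α → α} {f : β → β} {π : α → β}
    (hf : QuasiErgodic f ν) (hg : Measure.QuasiMeasurePreserving g μ μ)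
    (hπ : MeasurePreserving π μ ν) (hsemi : Semiconj π g f)
    (hfactor : ∀ A, MeasurableSet A → g ⁻¹' A = A → ∃ T, MeasurableSet T ∧ A =ᵐ[μ] π ⁻¹' T) :
    PreErgodic g μ where
  aeconst_set A hA hAinv := by
    obtain ⟨T, hT, hAT⟩ := hfactor A hA hAinv
    have hTinv : f ⁻¹' T =ᵐ[ν] T := by
      refine hπ.ae_eq_of_preimage_ae_eq (hf.measurable hT) hT ?_
      rw [← preimage_comp, ← hsemi.comp_eq, preimage_comp]
      exact (hg.preimage_ae_eq hAT.symm).trans (by rw [hAinv]; exact hAT)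
    exact (eventuallyConst_preimage.2 ((hf.aeconst_set₀ hT.nullMeasurableSet hTinv).anti
      hπ.quasiMeasurePreserving.tendsto_ae)).congr hAT.symm

end MeasureTheory

namespace InvLimit

open MeasureTheory

variable {M : Type*} {f : M → M}

def coord (f : M → M) (m : ℤ) (x : InvLimit f) : M := x.1 m

theorem coord_add_nat (m : ℤ) (k : ℕ) : coord f (m + k) = f^[k] ∘ coord f m := by
  funext x
  induction k with
  | zero => simp [coord]
  | succ k ih =>
    rw [comp_apply, iterate_succ_apply', ← comp_apply (f := f^[k]), ← ih]
    simp only [coord, Nat.cast_succ]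
    rw [x.2, add_assoc]

theorem coord_comp_shiftMap_iterate (m : ℤ) (k : ℕ) :
    coord f m ∘ (shiftMap f)^[k] = coord f (m + k) := by
  induction k with
  | zero => simp
  | succ k ih =>
    rw [iterate_succ, ← comp_assoc, ih]
    funext x
    simp only [comp_apply, coord, shiftMap, Nat.cast_succ, add_assoc]

theorem invProj_semiconj : Semiconj (invProj f) (shiftMap f) f :=
  fun x => (x.2 0).symm

variable [MeasurableSpace M]

theorem measurable_coord (m : ℤ) : Measurable (coord f m) :=
  (measurable_pi_apply m).comp measurable_subtype_coe

theorem measurable_invProj : Measurable (invProj f) :=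
  measurable_coord 0

theorem measurable_shiftMap : Measurable (shiftMap f) :=
  (measurable_pi_lambda _ fun n => measurable_coord (n + 1)).subtype_mk

theorem comap_coord_le (hf : Measurable f) {m m' : ℤ} (h : m' ≤ m) :
    MeasurableSpace.comap (coord f m) ‹_› ≤ MeasurableSpace.comap (coord f m') ‹_› := by
  obtain ⟨k, rfl⟩ : ∃ k : ℕ, m = m' + k := ⟨(m - m').toNat, by omega⟩
  rw [coord_add_nat, ← MeasurableSpace.comap_comp]
  exact MeasurableSpace.comap_mono (hf.iterate k).comap_le

theorem measurableSpace_eq_iSup (hf : Measurable f) :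
    (inferInstance : MeasurableSpace (InvLimit f)) =
      ⨆ n : ℕ, MeasurableSpace.comap (coord f (-n)) ‹_› := by
  have hpi : (inferInstance : MeasurableSpace (InvLimit f)) =
      ⨆ m : ℤ, MeasurableSpace.comap (coord f m) ‹_› := by
    change MeasurableSpace.comap Subtype.val MeasurableSpace.pi = _
    rw [MeasurableSpace.pi, MeasurableSpace.comap_iSup]
    exact iSup_congr fun m => MeasurableSpace.comap_comp
  rw [hpi]
  refine le_antisymm (iSup_le fun m => ?_) (iSup_le fun n => le_iSup_of_le (-n : ℤ) le_rfl)
  exact le_iSup_of_le m.natAbs (comap_coord_le hf (by omega))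

theorem exists_measure_symmDiff_coord_preimage_lt (hf : Measurable f) (μ : Measure (InvLimit f))
    [IsFiniteMeasure μ] {A : Set (InvLimit f)} (hA : MeasurableSet A) {ε : ℝ} (hε : 0 < ε) :
    ∃ n : ℕ, ∃ S, MeasurableSet S ∧ μ (A ∆ (coord f (-n) ⁻¹' S)) < ENNReal.ofReal ε := by
  have hmono : Monotone fun n : ℕ => MeasurableSpace.comap (coord f (-n)) ‹_› :=
    fun i j hij => comap_coord_le hf (by omega)
  have hdense := Measure.measureDense_iUnion_measurableSet μ hmono.directed_le
    (measurableSpace_eq_iSup hf)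
  obtain ⟨t, ht, hAt⟩ := hdense.approx A hA (measure_ne_top μ A) ε hε
  obtain ⟨n, ht⟩ := mem_iUnion.1 ht
  obtain ⟨S, hS, rfl⟩ := MeasurableSpace.measurableSet_comap.1 ht
  exact ⟨n, S, hS, hAt⟩

theorem exists_measure_symmDiff_invProj_preimage_lt (hf : Measurable f)
    {μ : Measure (InvLimit f)} [IsFiniteMeasure μ] (hshift : MeasurePreserving (shiftMap f) μ μ)
    {A : Set (InvLimit f)} (hA : MeasurableSet A) (hAinv : shiftMap f ⁻¹' A = A) {ε : ℝ}
    (hε : 0 < ε) :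
    ∃ S, MeasurableSet S ∧ μ (A ∆ (invProj f ⁻¹' S)) < ENNReal.ofReal ε := by
  obtain ⟨n, S, hS, hAS⟩ := exists_measure_symmDiff_coord_preimage_lt hf μ hA hε
  refine ⟨S, hS, ?_⟩
  have hpre : (shiftMap f)^[n] ⁻¹' (A ∆ (coord f (-n) ⁻¹' S)) = A ∆ (invProj f ⁻¹' S) := by
    rw [preimage_symmDiff, IsFixedPt.preimage_iterate hAinv, ← preimage_comp,
      coord_comp_shiftMap_iterate, neg_add_cancel]
    rfl
  rwa [← hpre, (hshift.iterate n).measure_preimage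
    (hA.symmDiff (measurable_coord _ hS)).nullMeasurableSet]

end InvLimit

open MeasureTheory InvLimit

theorem ergodic_lift_of_ergodic_general
    {M : Type*} [MeasurableSpace M] (f : M → M) (μ : Measure M)
    (μt : Measure ↥(InvLimit f)) [IsProbabilityMeasure μt]
    (htinv : μt.map (shiftMap f) = μt) (hproj : μt.map (invProj f) = μ)
    (herg : Ergodic f μ) :
    Ergodic (shiftMap f) μt := by
  have hshift : MeasurePreserving (shiftMap f) μt μt := ⟨measurable_shiftMap, htinv⟩
  refine ⟨hshift, herg.quasiErgodic.preErgodic_of_semiconj hshift.quasiMeasurePreserving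
    ⟨measurable_invProj, hproj⟩ invProj_semiconj fun A hA hAinv => ?_⟩
  exact exists_ae_eq_preimage_of_forall_measure_symmDiff_lt _ fun ε hε =>
    exists_measure_symmDiff_invProj_preimage_lt herg.measurable hshift hA hAinv hε

theorem ergodic_lift_of_ergodic
    {M : Type*} [MetricSpace M] [CompactSpace M] [Nonempty M]
    [MeasurableSpace M] [BorelSpace M]
    (f : M → M) (hf : Continuous f)
    (μ : Measure M) [IsProbabilityMeasure μ] (hinv : μ.map f = μ)
    (μt : Measure ↥(InvLimit f)) [IsProbabilityMeasure μt]
    (htinv : μt.map (shiftMap f) = μt) (hproj : μt.map (invProj f) = μ)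
    (herg : Ergodic f μ) :
    Ergodic (shiftMap f) μt :=
  ergodic_lift_of_ergodic_general f μ μt htinv hproj herg
end

section
/- Let M be a compact metric space and f : M → M a continuous map. Then exactly one of the following alternatives holds: either ω_f(x) ≠ M for every x ∈ M, or the set {x ∈ M : ω_f(x) = M} is residual (comeager) in M. -/
/-- The ω-limit set of `x` under `f`: `⋂_{N} closure {f^[n] x : n ≥ N}`. -/
def omegaLimitSet {M : Type*} [TopologicalSpace M] (f : M → M) (x : M) : Set M :=
  ⋂ N : ℕ, closure {y : M | ∃ n ≥ N, f^[n] x = y}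

lemma omega_univ_iff {M : Type*} [TopologicalSpace M] (f : M → M) (x : M) :
    omegaLimitSet f x = Set.univ ↔
      ∀ U : Set M, IsOpen U → U.Nonempty → ∀ N : ℕ, ∃ n ≥ N, f^[n] x ∈ U := by
  rw [omegaLimitSet, Set.iInter_eq_univ]
  constructor
  · intro h U hU hUne N
    have hd : Dense {y : M | ∃ n ≥ N, f^[n] x = y} := by
      rw [dense_iff_closure_eq]; exact h N
    obtain ⟨y, hyU, n, hn, hny⟩ := (dense_iff_inter_open.mp hd) U hU hUne
    exact ⟨n, hn, hny ▸ hyU⟩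
  · intro h N
    rw [← dense_iff_closure_eq, dense_iff_inter_open]
    intro U hU hUne
    obtain ⟨n, hn, hnU⟩ := h U hU hUne N
    exact ⟨f^[n] x, hnU, n, hn, rfl⟩

theorem transitivity_dichotomy
    {M : Type*} [MetricSpace M] [CompactSpace M] [Nonempty M]
    (f : M → M) (hf : Continuous f) :
    Xor' (∀ x : M, omegaLimitSet f x ≠ Set.univ)
      ({x : M | omegaLimitSet f x = Set.univ} ∈ residual M) := by
  classical
  by_cases h : ∃ x : M, omegaLimitSet f x = Set.univ
  · obtain ⟨x₀, hx₀⟩ := h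
    refine Or.inr ⟨?_, fun hA => (hA x₀) hx₀⟩
    have hx₀' := (omega_univ_iff f x₀).mp hx₀
    have hcount : (TopologicalSpace.countableBasis M).Countable :=
      TopologicalSpace.countable_countableBasis M
    haveI : Countable {s : Set M // s ∈ TopologicalSpace.countableBasis M} :=
      hcount.to_subtype
    set G : {s : Set M // s ∈ TopologicalSpace.countableBasis M} × ℕ → Set M :=
      fun p => if (p.1 : Set M).Nonempty
        then ⋃ n ∈ {n : ℕ | p.2 ≤ n}, f^[n] ⁻¹' (p.1 : Set M)
        else Set.univ with hG
    have key : (⋂ p, G p) ⊆ {x : M | omegaLimitSet f x = Set.univ} := by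
      intro x hx
      rw [Set.mem_setOf_eq, omega_univ_iff]
      intro U hU hUne N
      obtain ⟨y, hy⟩ := hUne
      obtain ⟨s, hsB, hys, hsU⟩ :=
        (TopologicalSpace.isBasis_countableBasis M).exists_subset_of_mem_open hy hU
      have hxs := Set.mem_iInter.mp hx (⟨s, hsB⟩, N)
      simp only [hG] at hxs
      rw [if_pos (Set.nonempty_of_mem hys)] at hxs
      obtain ⟨n, hn, hns⟩ := Set.mem_iUnion₂.mp hxs
      exact ⟨n, hn, hsU hns⟩
    refine Filter.mem_of_superset ?_ key
    refine (countable_iInter_mem).mpr fun p => ?_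
    simp only [hG]
    by_cases hne : (p.1 : Set M).Nonempty
    · rw [if_pos hne]
      have hopen : IsOpen (⋃ n ∈ {n : ℕ | p.2 ≤ n}, f^[n] ⁻¹' (p.1 : Set M)) :=
        isOpen_biUnion fun n _ =>
          (TopologicalSpace.isOpen_of_mem_countableBasis p.1.2).preimage (hf.iterate n)
      refine residual_of_dense_open hopen ?_
      rw [dense_iff_inter_open]
      intro V hV hVne
      obtain ⟨m, _, hm⟩ := hx₀' V hV hVne 0
      obtain ⟨n, hn, hns⟩ := hx₀'
        (p.1 : Set M) (TopologicalSpace.isOpen_of_mem_countableBasis p.1.2) hne (m + p.2)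
      refine ⟨f^[m] x₀, hm, Set.mem_iUnion₂.mpr ⟨n - m, by simp only [Set.mem_setOf_eq]; omega, ?_⟩⟩
      have : f^[n - m] (f^[m] x₀) = f^[n] x₀ := by
        rw [← Function.iterate_add_apply]
        congr 1
        omega
      simpa [this] using hns
    · rw [if_neg hne]
      exact Filter.univ_mem
  · push_neg at h
    refine Or.inl ⟨h, fun hres => ?_⟩
    obtain ⟨x, hx⟩ := (dense_of_mem_residual hres).nonempty
    exact h x hx
end

section
/- Let M be a nonempty compact metric space and f : M → M a continuous surjection. Let x ∈ M be a point whose total orbit O_T(x) is dense in M. Then the set O_T^f(x) := {x̃ ∈ M^f : x̃ n ∈ O_T(x) for all n ∈ ℤ} is dense in the inverse limit space M^f. -/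
/-- The total orbit of a point `x`: all forward images of `x` together with
all iterated preimages of `x`. -/
def totalOrbit {M : Type*} (f : M → M) (x : M) : Set M :=
  (Set.range fun n : ℕ => f^[n] x) ∪ ⋃ n : ℕ, f^[n + 1] ⁻¹' {x}

lemma totalOrbit_maps {M : Type*} (f : M → M) (x z : M) (hz : z ∈ totalOrbit f x) :
    f z ∈ totalOrbit f x := by
  rcases hz with ⟨n, rfl⟩ | hz
  · exact Or.inl ⟨n + 1, by simp [Function.iterate_succ_apply']⟩
  · simp only [Set.mem_iUnion, Set.mem_preimage, Set.mem_singleton_iff] at hz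
    obtain ⟨n, hn⟩ := hz
    cases n with
    | zero => exact Or.inl ⟨0, by simpa using hn.symm⟩
    | succ m =>
      refine Or.inr (Set.mem_iUnion.2 ⟨m, ?_⟩)
      simp only [Set.mem_preimage, Set.mem_singleton_iff]
      rw [← Function.iterate_succ_apply]
      exact hn

lemma totalOrbit_iter {M : Type*} (f : M → M) (x z : M) (hz : z ∈ totalOrbit f x) (k : ℕ) :
    f^[k] z ∈ totalOrbit f x := by
  induction k with
  | zero => simpa using hz
  | succ m ih => rw [Function.iterate_succ_apply']; exact totalOrbit_maps f x _ ih

lemma totalOrbit_pre {M : Type*} (f : M → M) (hsurj : Function.Surjective f) (x z : M)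
    (hz : z ∈ totalOrbit f x) : ∃ w ∈ totalOrbit f x, f w = z := by
  obtain ⟨w, hw⟩ := hsurj z
  rcases hz with ⟨n, rfl⟩ | hz
  · cases n with
    | zero =>
      refine ⟨w, Or.inr (Set.mem_iUnion.2 ⟨0, ?_⟩), hw⟩
      simpa using hw
    | succ m =>
      exact ⟨f^[m] x, Or.inl ⟨m, rfl⟩, (Function.iterate_succ_apply' f m x).symm⟩
  · simp only [Set.mem_iUnion, Set.mem_preimage, Set.mem_singleton_iff] at hz
    obtain ⟨n, hn⟩ := hz
    refine ⟨w, Or.inr (Set.mem_iUnion.2 ⟨n + 1, ?_⟩), hw⟩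
    simp only [Set.mem_preimage, Set.mem_singleton_iff]
    rw [Function.iterate_succ_apply, hw]
    exact hn

lemma invlimit_iterate {M : Type*} (f : M → M) (y : ℤ → M) (hy : y ∈ InvLimit f)
    (n : ℤ) (k : ℕ) : y (n + k) = f^[k] (y n) := by
  induction k with
  | zero => simp
  | succ m ih =>
    have h : (n + ((m : ℤ) + 1)) = (n + m) + 1 := by ring
    push_cast
    rw [h, ← hy (n + m), ih, ← Function.iterate_succ_apply' f m (y n)]

theorem dense_total_orbit_lift
    {M : Type*} [MetricSpace M] [CompactSpace M] [Nonempty M]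
    (f : M → M) (hf : Continuous f) (hsurj : Function.Surjective f)
    (x : M) (hx : Dense (totalOrbit f x)) :
    Dense (setOf fun y : ↥(InvLimit f) => ∀ n : ℤ, (y : ℤ → M) n ∈ totalOrbit f x) := by
  rw [dense_iff_inter_open]
  rintro U hU ⟨y₀, hy₀U⟩
  obtain ⟨V, hV, rfl⟩ := isOpen_induced_iff.mp hU
  obtain ⟨I, u, hu, hsub⟩ := isOpen_pi_iff.mp hV _ hy₀U
  set N : ℕ := I.sup fun i => (-i).toNat with hNdef
  have hN : ∀ i ∈ I, (0 : ℤ) ≤ i + N := by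
    intro i hi
    have h1 : (-i).toNat ≤ N := Finset.le_sup (f := fun i => (-i).toNat) hi
    omega
  set y : ℤ → M := (y₀ : ℤ → M) with hydef
  set z₀ : M := y (-(N : ℤ)) with hz₀def
  have hyit : ∀ i ∈ I, y i = f^[(i + N).toNat] z₀ := by
    intro i hi
    have := invlimit_iterate f y y₀.2 (-(N : ℤ)) ((i + N).toNat)
    rwa [show (-(N : ℤ) + ((i + N).toNat : ℤ)) = i by
      rw [Int.toNat_of_nonneg (hN i hi)]; ring] at this
  set W : Set M := {w : M | ∀ i ∈ I, f^[(i + (N : ℤ)).toNat] w ∈ u i} with hWdef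
  have hW : IsOpen W := by
    have hEq : W = ⋂ i ∈ I, f^[(i + (N : ℤ)).toNat] ⁻¹' u i := by
      ext w; simp [hWdef]
    rw [hEq]
    exact isOpen_biInter_finset fun i hi => ((hu i hi).1).preimage (hf.iterate _)
  have hz₀W : z₀ ∈ W := by
    intro i hi
    rw [← hyit i hi]
    exact (hu i hi).2
  obtain ⟨z, hzT, hzW⟩ := hx.exists_mem_open hW ⟨z₀, hz₀W⟩
  -- backward chain
  have hpre : ∀ p : totalOrbit f x, ∃ q : totalOrbit f x, f q.val = p.val := by
    rintro ⟨p, hp⟩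
    obtain ⟨w, hw, hfw⟩ := totalOrbit_pre f hsurj x p hp
    exact ⟨⟨w, hw⟩, hfw⟩
  choose g hg using hpre
  set b : ℕ → totalOrbit f x := fun k => g^[k] ⟨z, hzT⟩ with hbdef
  have hb0 : (b 0).val = z := rfl
  have hbstep : ∀ k, f (b (k + 1)).val = (b k).val := by
    intro k
    have : b (k + 1) = g (b k) := Function.iterate_succ_apply' g k _
    rw [this]
    exact hg (b k)
  set xt : ℤ → M := fun n =>
    if 0 ≤ n + (N : ℤ) then f^[(n + N).toNat] z else (b (-(n + N)).toNat).val with hxtdef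
  have hxtpos : ∀ n : ℤ, 0 ≤ n + (N : ℤ) → xt n = f^[(n + N).toNat] z := by
    intro n hn; simp only [hxtdef, if_pos hn]
  have hxtneg : ∀ n : ℤ, ¬ 0 ≤ n + (N : ℤ) → xt n = (b (-(n + N)).toNat).val := by
    intro n hn; simp only [hxtdef, if_neg hn]
  have hlim : xt ∈ InvLimit f := by
    intro n
    by_cases h1 : 0 ≤ n + (N : ℤ)
    · rw [hxtpos n h1, hxtpos (n + 1) (by omega)]
      rw [show (n + 1 + (N : ℤ)).toNat = (n + N).toNat + 1 by omega]
      exact (Function.iterate_succ_apply' f _ z).symm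
    · by_cases h2 : 0 ≤ n + 1 + (N : ℤ)
      · have h3 : n + (N : ℤ) = -1 := by omega
        rw [hxtneg n h1, hxtpos (n + 1) h2]
        rw [show (-(n + (N : ℤ))).toNat = 1 by omega,
            show (n + 1 + (N : ℤ)).toNat = 0 by omega]
        simpa using (hbstep 0).trans hb0
      · rw [hxtneg n h1, hxtneg (n + 1) h2]
        rw [show (-(n + (N : ℤ))).toNat = (-(n + 1 + N)).toNat + 1 by omega]
        exact hbstep _
  have horb : ∀ n : ℤ, xt n ∈ totalOrbit f x := by
    intro n
    by_cases h1 : 0 ≤ n + (N : ℤ)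
    · rw [hxtpos n h1]; exact totalOrbit_iter f x z hzT _
    · rw [hxtneg n h1]; exact (b _).2
  refine ⟨⟨xt, hlim⟩, ?_, horb⟩
  apply hsub
  intro i hi
  have hi' : i ∈ I := hi
  show xt i ∈ u i
  rw [hxtpos i (hN i hi')]
  exact hzW i hi'
end
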